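/- Let 0 < a < b and let n ∈ ℤ with |n| ≥ 2. For λ, μ ∈ [0,∞) with λ + μ > 0 and q > 1 with 1/p + 1/q = 1, set M₁ = A(a^{(n−1)q}, A_{λ/(λ+μ)}(b,a)^{(n−1)q}) and M₂ = A(b^{(n−1)q}, A_{λ/(λ+μ)}(b,a)^{(n−1)q}). Then |A_{λ/(λ+μ)}(aⁿ, bⁿ) − Lₙⁿ(a,b)| ≤ ((b−a)/(λ+μ)²) · (1/(p+1))^{1/p} · |n| · [λ² M₁^{1/q} + μ² M₂^{1/q}]. -/

import Mathlib

/-!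
Integration by parts against the kernel `u - x`, where `x = (λb + μa)/(λ + μ)` divides `[a, b]`
in the ratio `λ : μ`, turns the difference between the weighted mean of `f a`, `f b` and the
average of `f` over `[a, b]` into `(b - a)⁻¹ ∫ₐᵇ (u - x) f' u du`. On each of `[a, x]` and
`[x, b]`, Hölder's inequality separates `|u - x|`, whose `p`-th power integrates exactly, from
`|f'|`, and the Hermite–Hadamard inequality bounds the integral of the convex function `|f'|^q`
by the trapezoid. For `f u = uⁿ` we have `|f'|^q = |n|^q u^((n-1)q)`, convex on `(0, ∞)` because
`(n - 1) q` is either `≤ 0` or `≥ 1`.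
-/

open Set MeasureTheory intervalIntegral

lemma convexOn_rpow_of_nonpos {s : ℝ} (hs : s ≤ 0) :
    ConvexOn ℝ (Ioi 0) fun x : ℝ => x ^ s := by
  have hlog : Real.log '' Ioi 0 = univ :=
    eq_univ_of_forall fun y => ⟨Real.exp y, Real.exp_pos y, Real.log_exp y⟩
  have hexp : ConvexOn ℝ (Real.log '' Ioi 0) fun y => Real.exp (y * s) := by
    rw [hlog]
    exact convexOn_exp.comp_linearMap (LinearMap.smulRight LinearMap.id s)
  refine (hexp.comp_concaveOn strictConcaveOn_log_Ioi.concaveOn ?_).congr fun x hx => ?_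
  · exact fun y _ z _ hyz => Real.exp_le_exp.2 (mul_le_mul_of_nonpos_right hyz hs)
  · exact (Real.rpow_def_of_pos hx s).symm

lemma convexOn_Ioi_rpow {s : ℝ} (hs : s ≤ 0 ∨ 1 ≤ s) :
    ConvexOn ℝ (Ioi 0) fun x : ℝ => x ^ s :=
  hs.elim convexOn_rpow_of_nonpos fun hs =>
    (convexOn_rpow hs).subset Ioi_subset_Ici_self (convex_Ioi 0)

theorem ConvexOn.integral_le_trapezoid {f : ℝ → ℝ} {c d : ℝ} (hcd : c ≤ d)
    (hf : ConvexOn ℝ (Icc c d) f) (hint : IntervalIntegrable f volume c d) :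
    ∫ u in c..d, f u ≤ (d - c) * ((f c + f d) / 2) := by
  rcases hcd.eq_or_lt with rfl | hlt
  · simp
  have hdc : 0 < d - c := sub_pos.2 hlt
  have hchord : ∀ u ∈ Icc c d, f u ≤ ((d - u) * f c + (u - c) * f d) / (d - c) := by
    intro u hu
    have h := hf.2 (left_mem_Icc.2 hcd) (right_mem_Icc.2 hcd)
      (div_nonneg (sub_nonneg.2 hu.2) hdc.le) (div_nonneg (sub_nonneg.2 hu.1) hdc.le)
      (by field_simp; ring)
    have hu_eq : (d - u) / (d - c) * c + (u - c) / (d - c) * d = u := by field_simp; ring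
    simp only [smul_eq_mul, hu_eq] at h
    exact h.trans_eq (by ring)
  calc ∫ u in c..d, f u ≤ ∫ u in c..d, ((d - u) * f c + (u - c) * f d) / (d - c) :=
        integral_mono_on hcd hint (Continuous.intervalIntegrable (by fun_prop) _ _) hchord
    _ = (d - c) * ((f c + f d) / 2) := by
        rw [intervalIntegral.integral_div,
          integral_add (Continuous.intervalIntegrable (by fun_prop) _ _)
            (Continuous.intervalIntegrable (by fun_prop) _ _)]
        simp only [intervalIntegral.integral_mul_const, integral_comp_sub_left (fun x => x),
          integral_comp_sub_right (fun x => x), integral_id]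
        field_simp
        ring

lemma ContinuousOn.memLp_restrict_Ioc {f : ℝ → ℝ} {c d : ℝ} (hf : ContinuousOn f (Icc c d))
    (r : ENNReal) : MemLp f r (volume.restrict (Ioc c d)) := by
  obtain ⟨C, hC⟩ := isCompact_Icc.exists_bound_of_continuousOn hf
  exact MemLp.of_bound ((hf.mono Ioc_subset_Icc_self).aestronglyMeasurable measurableSet_Ioc) C
    ((ae_restrict_iff' measurableSet_Ioc).2
      (ae_of_all _ fun u hu => hC u (Ioc_subset_Icc_self hu)))

lemma integral_mul_le_Lp_mul_Lq_of_continuousOn {p q : ℝ} (hpq : p.HolderConjugate q)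
    {f g : ℝ → ℝ} {c d : ℝ} (hcd : c ≤ d) (hf : ContinuousOn f (Icc c d))
    (hg : ContinuousOn g (Icc c d)) (hf₀ : ∀ u ∈ Icc c d, 0 ≤ f u)
    (hg₀ : ∀ u ∈ Icc c d, 0 ≤ g u) :
    ∫ u in c..d, f u * g u ≤
      (∫ u in c..d, f u ^ p) ^ (1 / p) * (∫ u in c..d, g u ^ q) ^ (1 / q) := by
  have hae : ∀ h : ℝ → ℝ, (∀ u ∈ Icc c d, 0 ≤ h u) → 0 ≤ᵐ[volume.restrict (Ioc c d)] h :=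
    fun h h₀ => (ae_restrict_iff' measurableSet_Ioc).2
      (ae_of_all _ fun u hu => h₀ u (Ioc_subset_Icc_self hu))
  simp only [integral_of_le hcd]
  exact integral_mul_le_Lp_mul_Lq_of_nonneg hpq (hae f hf₀) (hae g hg₀)
    (hf.memLp_restrict_Ioc _) (hg.memLp_restrict_Ioc _)

lemma integral_abs_sub_rpow {c d e p : ℝ} (hcd : c ≤ d) (hp : -1 < p) (he : e = c ∨ e = d) :
    ∫ u in c..d, |u - e| ^ p = (d - c) ^ (p + 1) / (p + 1) := by
  have hp₁ : p + 1 ≠ 0 := by linarith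
  rcases he with rfl | rfl
  · have h : EqOn (fun u => |u - e| ^ p) (fun u => (u - e) ^ p) (uIcc e d) := fun u hu => by
      rw [uIcc_of_le hcd] at hu
      dsimp only
      rw [abs_of_nonneg (sub_nonneg.2 hu.1)]
    rw [integral_congr h, integral_comp_sub_right (· ^ p), sub_self, integral_rpow (Or.inl hp),
      Real.zero_rpow hp₁, sub_zero]
  · have h : EqOn (fun u => |u - e| ^ p) (fun u => (e - u) ^ p) (uIcc c e) := fun u hu => by
      rw [uIcc_of_le hcd] at hu
      dsimp only
      rw [abs_sub_comm, abs_of_nonneg (sub_nonneg.2 hu.2)]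
    rw [integral_congr h, integral_comp_sub_left (· ^ p), sub_self, integral_rpow (Or.inl hp),
      Real.zero_rpow hp₁, sub_zero]

lemma abs_integral_sub_mul_le {p q : ℝ} (hpq : p.HolderConjugate q) {g : ℝ → ℝ} {c d e : ℝ}
    (hcd : c ≤ d) (he : e = c ∨ e = d) (hg : ContinuousOn g (Icc c d))
    (hconv : ConvexOn ℝ (Icc c d) fun u => |g u| ^ q) :
    |∫ u in c..d, (u - e) * g u| ≤
      (d - c) ^ 2 * (1 / (p + 1)) ^ (1 / p) * ((|g c| ^ q + |g d| ^ q) / 2) ^ (1 / q) := by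
  set M := (|g c| ^ q + |g d| ^ q) / 2
  have hdc : 0 ≤ d - c := sub_nonneg.2 hcd
  have hM : 0 ≤ M := by positivity
  have hgq : ContinuousOn (fun u => |g u| ^ q) (Icc c d) :=
    hg.abs.rpow_const fun _ _ => Or.inr hpq.symm.nonneg
  have htrap : ∫ u in c..d, |g u| ^ q ≤ (d - c) * M :=
    hconv.integral_le_trapezoid hcd (hgq.intervalIntegrable_of_Icc hcd)
  have hp₀ := hpq.pos
  have hq₀ := hpq.symm.pos
  have hholder := integral_mul_le_Lp_mul_Lq_of_continuousOn hpq hcd (f := fun u => |u - e|)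
    (by fun_prop) hg.abs (fun _ _ => abs_nonneg _) (fun _ _ => abs_nonneg _)
  rw [integral_abs_sub_rpow hcd (by linarith) he] at hholder
  have hexp : (d - c) ^ ((p + 1) * (1 / p)) * (d - c) ^ (1 / q) = (d - c) ^ 2 := by
    have hsum : (p + 1) * (1 / p) + 1 / q = 2 := by
      have h := hpq.inv_add_inv_eq_one
      have := hpq.ne_zero
      field_simp at h ⊢
      linarith
    rw [← Real.rpow_add' hdc (by rw [hsum]; norm_num), hsum]
    norm_num
  calc |∫ u in c..d, (u - e) * g u| ≤ ∫ u in c..d, |u - e| * |g u| :=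
        (abs_integral_le_integral_abs hcd).trans_eq (integral_congr fun u _ => abs_mul _ _)
    _ ≤ ((d - c) ^ (p + 1) / (p + 1)) ^ (1 / p) * (∫ u in c..d, |g u| ^ q) ^ (1 / q) := hholder
    _ ≤ ((d - c) ^ (p + 1) / (p + 1)) ^ (1 / p) * ((d - c) * M) ^ (1 / q) := by
        gcongr
        exact integral_nonneg hcd fun u _ => by positivity
    _ = (d - c) ^ 2 * (1 / (p + 1)) ^ (1 / p) * M ^ (1 / q) := by
        rw [div_eq_mul_one_div, Real.mul_rpow (by positivity) (by positivity),
          ← Real.rpow_mul hdc, Real.mul_rpow hdc hM, ← hexp]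
        ring

lemma integral_sub_mul_deriv {f f' : ℝ → ℝ} {a b : ℝ}
    (hf : ∀ u ∈ uIcc a b, HasDerivAt f (f' u) u)
    (hf' : IntervalIntegrable f' volume a b) (x : ℝ) :
    ∫ u in a..b, (u - x) * f' u = (b - x) * f b - (a - x) * f a - ∫ u in a..b, f u := by
  simpa using integral_mul_deriv_eq_deriv_mul (fun u _ => (hasDerivAt_id' u).sub_const x) hf
    intervalIntegrable_const hf'

theorem abs_weighted_mean_sub_average_le {p q : ℝ} (hpq : p.HolderConjugate q) {f f' : ℝ → ℝ}
    {a b lam mu x : ℝ} (hab : a < b) (hlam : 0 ≤ lam) (hmu : 0 ≤ mu) (hlm : 0 < lam + mu)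
    (hx : x = (lam * b + mu * a) / (lam + mu)) (hf : ∀ u ∈ Icc a b, HasDerivAt f (f' u) u)
    (hf' : ContinuousOn f' (Icc a b)) (hconv : ConvexOn ℝ (Icc a b) fun u => |f' u| ^ q) :
    |(lam * f a + mu * f b) / (lam + mu) - (∫ u in a..b, f u) / (b - a)| ≤
      (b - a) / (lam + mu) ^ 2 * (1 / (p + 1)) ^ (1 / p) *
        (lam ^ 2 * ((|f' a| ^ q + |f' x| ^ q) / 2) ^ (1 / q) +
          mu ^ 2 * ((|f' x| ^ q + |f' b| ^ q) / 2) ^ (1 / q)) := by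
  have hba : 0 < b - a := sub_pos.2 hab
  have hxa : x - a = lam * (b - a) / (lam + mu) := by rw [hx]; field_simp; ring
  have hbx : b - x = mu * (b - a) / (lam + mu) := by rw [hx]; field_simp; ring
  have hax : a ≤ x := sub_nonneg.1 (hxa ▸ by positivity)
  have hxb : x ≤ b := sub_nonneg.1 (hbx ▸ by positivity)
  have hsub₁ : Icc a x ⊆ Icc a b := Icc_subset_Icc_right hxb
  have hsub₂ : Icc x b ⊆ Icc a b := Icc_subset_Icc_left hax
  have hF : ContinuousOn (fun u => (u - x) * f' u) (Icc a b) := by fun_prop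
  have hident : (lam * f a + mu * f b) / (lam + mu) - (∫ u in a..b, f u) / (b - a) =
      (∫ u in a..b, (u - x) * f' u) / (b - a) := by
    rw [integral_sub_mul_deriv (by rwa [uIcc_of_le hab.le]) (hf'.intervalIntegrable_of_Icc hab.le),
      hx]
    field_simp
    ring
  have hsplit : ∫ u in a..b, (u - x) * f' u =
      (∫ u in a..x, (u - x) * f' u) + ∫ u in x..b, (u - x) * f' u :=
    (integral_add_adjacent_intervals ((hF.mono hsub₁).intervalIntegrable_of_Icc hax)
      ((hF.mono hsub₂).intervalIntegrable_of_Icc hxb)).symm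
  have h₁ := abs_integral_sub_mul_le hpq hax (Or.inr rfl) (hf'.mono hsub₁)
    (hconv.subset hsub₁ (convex_Icc a x))
  have h₂ := abs_integral_sub_mul_le hpq hxb (Or.inl rfl) (hf'.mono hsub₂)
    (hconv.subset hsub₂ (convex_Icc x b))
  rw [hident, abs_div, abs_of_pos hba, div_le_iff₀ hba, hsplit]
  calc _ ≤ _ := abs_add_le _ _
    _ ≤ _ := add_le_add h₁ h₂
    _ = _ := by rw [hxa, hbx]; field_simp

lemma int_sub_one_mul_nonpos_or_one_le (n : ℤ) {q : ℝ} (hq : 1 ≤ q) :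
    ((n : ℝ) - 1) * q ≤ 0 ∨ 1 ≤ ((n : ℝ) - 1) * q := by
  rcases le_or_gt n 1 with hn | hn
  · left
    have : (n : ℝ) ≤ 1 := by exact_mod_cast hn
    nlinarith
  · right
    have : (2 : ℝ) ≤ n := by exact_mod_cast hn
    nlinarith

lemma abs_intCast_mul_zpow_sub_one_rpow (n : ℤ) (q : ℝ) {u : ℝ} (hu : 0 < u) :
    |(n : ℝ) * u ^ (n - 1)| ^ q = |(n : ℝ)| ^ q * u ^ (((n : ℝ) - 1) * q) := by
  rw [abs_mul, abs_of_pos (zpow_pos hu (n - 1)), Real.mul_rpow (abs_nonneg _) (zpow_pos hu _).le,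
    ← Real.rpow_intCast, ← Real.rpow_mul hu.le]
  push_cast
  rfl

lemma convexOn_abs_intCast_mul_zpow_sub_one_rpow (n : ℤ) {q : ℝ} (hq : 1 ≤ q) :
    ConvexOn ℝ (Ioi 0) fun u : ℝ => |(n : ℝ) * u ^ (n - 1)| ^ q :=
  ((convexOn_Ioi_rpow (int_sub_one_mul_nonpos_or_one_le n hq)).smul
    (by positivity : (0 : ℝ) ≤ |(n : ℝ)| ^ q)).congr
      fun _ hu => (abs_intCast_mul_zpow_sub_one_rpow n q hu).symm

lemma rpow_mean_abs_intCast_mul_zpow_sub_one (n : ℤ) {q : ℝ} (hq : 0 < q) {u v : ℝ}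
    (hu : 0 < u) (hv : 0 < v) :
    ((|(n : ℝ) * u ^ (n - 1)| ^ q + |(n : ℝ) * v ^ (n - 1)| ^ q) / 2) ^ (1 / q) =
      |(n : ℝ)| * ((u ^ (((n : ℝ) - 1) * q) + v ^ (((n : ℝ) - 1) * q)) / 2) ^ (1 / q) := by
  rw [abs_intCast_mul_zpow_sub_one_rpow n q hu, abs_intCast_mul_zpow_sub_one_rpow n q hv,
    ← mul_add, mul_div_assoc, Real.mul_rpow (by positivity) (by positivity),
    ← Real.rpow_mul (abs_nonneg _), mul_one_div_cancel hq.ne', Real.rpow_one]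

/-- Proposition 3.2 of the paper: application to special means, where
`A(x,y) = (x+y)/2`, `A_{λ/(λ+μ)}(b,a) = (λb+μa)/(λ+μ)` and
`Lₙⁿ(a,b) = (b^{n+1} - a^{n+1})/((n+1)(b-a))`. -/
theorem stmt_11 (a b : ℝ) (ha : 0 < a) (hab : a < b)
    (n : ℤ) (hn : 2 ≤ |n|)
    (lam mu : ℝ) (hlam : 0 ≤ lam) (hmu : 0 ≤ mu) (hlm : 0 < lam + mu)
    (p q : ℝ) (hq : 1 < q) (hpq : 1 / p + 1 / q = 1)
    (M1 M2 : ℝ)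
    (hM1 : M1 = (a ^ (((n : ℝ) - 1) * q) +
      ((lam * b + mu * a) / (lam + mu)) ^ (((n : ℝ) - 1) * q)) / 2)
    (hM2 : M2 = (b ^ (((n : ℝ) - 1) * q) +
      ((lam * b + mu * a) / (lam + mu)) ^ (((n : ℝ) - 1) * q)) / 2) :
    |(lam / (lam + mu)) * a ^ n + (mu / (lam + mu)) * b ^ n -
        (b ^ (n + 1) - a ^ (n + 1)) / (((n : ℝ) + 1) * (b - a))| ≤
      ((b - a) / (lam + mu) ^ 2) * (1 / (p + 1)) ^ (1 / p) * |(n : ℝ)| *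
        (lam ^ 2 * M1 ^ (1 / q) + mu ^ 2 * M2 ^ (1 / q)) := by
  have hpq' : p.HolderConjugate q :=
    (Real.holderConjugate_iff.2 ⟨hq, by simpa only [one_div, add_comm] using hpq⟩).symm
  have hpos : ∀ u ∈ Icc a b, u ≠ 0 := fun u hu => (ha.trans_le hu.1).ne'
  have hx : 0 < (lam * b + mu * a) / (lam + mu) := div_pos (by nlinarith) hlm
  have hn₁ : n ≠ -1 := by rintro rfl; norm_num at hn
  have h0 : (0 : ℝ) ∉ uIcc a b := fun h => hpos 0 (uIcc_of_le hab.le ▸ h) rfl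
  have key := abs_weighted_mean_sub_average_le hpq' hab hlam hmu hlm rfl
    (fun u hu => hasDerivAt_zpow n u (Or.inl (hpos u hu)))
    (continuousOn_const.mul fun u hu =>
      (continuousAt_zpow₀ u _ (Or.inl (hpos u hu))).continuousWithinAt)
    ((convexOn_abs_intCast_mul_zpow_sub_one_rpow n hq.le).subset
      ((Icc_subset_Ioi_iff hab.le).2 ha) (convex_Icc a b))
  rw [integral_zpow (Or.inr ⟨hn₁, h0⟩), div_div,
    rpow_mean_abs_intCast_mul_zpow_sub_one n (by linarith) ha hx,
    rpow_mean_abs_intCast_mul_zpow_sub_one n (by linarith) hx (ha.trans hab)] at key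
  refine (le_of_eq ?_).trans (key.trans_eq ?_)
  · congr 1
    ring
  · rw [hM1, hM2, add_comm (b ^ _)]
    ring
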